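/- arXiv:2511.16095 — 2 statements merged into one kernel-verified Lean document; each statement's English description precedes it below -/
import Mathlib

section
/- Let M₁ and M₂ be Euclidean spaces (ℝ^m and ℝ^n), let π : M₁ × M₂ → M₂ be the natural projection, and let E ⊂ M₁ × M₂. Then dim_H E ≥ dim_H π(E) + inf_{p ∈ π(E)} dim_H(π^{-1}(p) ∩ E), where dim_H denotes Hausdorff dimension. -/
open MeasureTheory Set EMetric Function
open scoped ENNReal NNReal

noncomputable section
namespace MarstrandAux





variable {Z : Type*} [PseudoEMetricSpace Z]

/-- The pre-Hausdorff measure at scale `r`, matching `hausdorffMeasure_apply`. -/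
def Hpre (d : ℝ) (r : ℝ≥0∞) (S : Set Z) : ℝ≥0∞ :=
  ⨅ (t : ℕ → Set Z) (_ : S ⊆ ⋃ i, t i) (_ : ∀ i, diam (t i) ≤ r),
    ∑' i, ⨆ _ : (t i).Nonempty, diam (t i) ^ d

theorem hausdorffMeasure_eq_iSup_Hpre {Z : Type*} [EMetricSpace Z] [MeasurableSpace Z]
    [BorelSpace Z] (d : ℝ) (S : Set Z) :
    μH[d] S = ⨆ (r : ℝ≥0∞) (_ : 0 < r), Hpre d r S := by
  rw [Measure.hausdorffMeasure_apply]; rfl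

theorem Hpre_mono {d : ℝ} {r : ℝ≥0∞} {S T : Set Z} (h : S ⊆ T) : Hpre d r S ≤ Hpre d r T := by
  refine le_iInf fun t => le_iInf fun h1 => le_iInf fun h2 => ?_
  exact iInf_le_of_le t (iInf_le_of_le (h.trans h1) (iInf_le_of_le h2 le_rfl))

theorem Hpre_anti {d : ℝ} {r r' : ℝ≥0∞} (h : r ≤ r') {S : Set Z} :
    Hpre d r' S ≤ Hpre d r S := by
  refine le_iInf fun t => le_iInf fun h1 => le_iInf fun h2 => ?_
  exact iInf_le_of_le t (iInf_le_of_le h1 (iInf_le_of_le (fun i => (h2 i).trans h) le_rfl))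

theorem Hpre_le_tsum {d : ℝ} {r : ℝ≥0∞} {S : Set Z} {ι : Type*} [Countable ι]
    (t : ι → Set Z) (hc : S ⊆ ⋃ i, t i) (hd : ∀ i, diam (t i) ≤ r) :
    Hpre d r S ≤ ∑' i, ⨆ _ : (t i).Nonempty, diam (t i) ^ d := by
  haveI : Encodable ι := Encodable.ofCountable ι
  set t' : ℕ → Set Z := fun k => (Encodable.decode₂ ι k).elim ∅ t with ht'
  have key : ∀ i : ι, t' (Encodable.encode i) = t i := by
    intro i; simp [ht', Encodable.decode₂_encode]
  have hcov : S ⊆ ⋃ k, t' k := by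
    refine hc.trans (iUnion_subset fun i => ?_)
    exact (key i) ▸ subset_iUnion t' (Encodable.encode i)
  have hdiam : ∀ k, diam (t' k) ≤ r := by
    intro k
    rcases h : Encodable.decode₂ ι k with _ | i
    · simp [ht', h, EMetric.diam]
    · simpa [ht', h] using hd i
  have hle : Hpre d r S ≤ ∑' k, ⨆ _ : (t' k).Nonempty, diam (t' k) ^ d := by
    simp only [Hpre]
    exact iInf_le_of_le t' (iInf_le_of_le hcov (iInf_le_of_le hdiam le_rfl))
  refine hle.trans ?_
  have : ∀ i : ι, (⨆ _ : (t' (Encodable.encode i)).Nonempty, diam (t' (Encodable.encode i)) ^ d)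
      = ⨆ _ : (t i).Nonempty, diam (t i) ^ d := fun i => by rw [key i]
  have hsupp : Function.support (fun k => ⨆ _ : (t' k).Nonempty, diam (t' k) ^ d)
      ⊆ Set.range (Encodable.encode (α := ι)) := by
    intro k hk
    rcases h : Encodable.decode₂ ι k with _ | i
    · exfalso; apply hk; simp [ht', h, Set.not_nonempty_empty]
    · exact ⟨i, Encodable.mem_decode₂.mp h⟩
  have heq := Function.Injective.tsum_eq (g := Encodable.encode (α := ι))
    (Encodable.encode_injective) (f := fun k => ⨆ _ : (t' k).Nonempty, diam (t' k) ^ d) hsupp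
  calc ∑' k, ⨆ _ : (t' k).Nonempty, diam (t' k) ^ d
      = ∑' i : ι, ⨆ _ : (t' (Encodable.encode i)).Nonempty, diam (t' (Encodable.encode i)) ^ d :=
        heq.symm
    _ = ∑' i : ι, ⨆ _ : (t i).Nonempty, diam (t i) ^ d := tsum_congr this
    _ ≤ _ := le_rfl

theorem Hpre_empty (d : ℝ) (r : ℝ≥0∞) : Hpre d r (∅ : Set Z) = 0 := by
  refine le_antisymm ?_ (zero_le)
  have := Hpre_le_tsum (d := d) (r := r) (S := (∅ : Set Z)) (ι := ℕ) (fun _ => ∅)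
    (by simp) (by simp [EMetric.diam])
  simpa [Set.not_nonempty_empty] using this

theorem Hpre_iUnion_le (d : ℝ) (r : ℝ≥0∞) (D : ℕ → Set Z) :
    Hpre d r (⋃ j, D j) ≤ ∑' j, Hpre d r (D j) := by
  rcases eq_or_ne (∑' j, Hpre d r (D j)) ∞ with htop | hfin
  · simp [htop]
  refine ENNReal.le_of_forall_pos_le_add fun ε hε _ => ?_
  have hfin' : ∀ j, Hpre d r (D j) ≠ ∞ := fun j => ne_top_of_le_ne_top hfin (ENNReal.le_tsum j)
  have hex : ∀ j : ℕ, ∃ (t : ℕ → Set Z), (D j ⊆ ⋃ i, t i) ∧ (∀ i, diam (t i) ≤ r) ∧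
      (∑' i, ⨆ _ : (t i).Nonempty, diam (t i) ^ d) ≤ Hpre d r (D j) + ε * (2⁻¹) ^ (j + 1) := by
    intro j
    have hlt : Hpre d r (D j) < Hpre d r (D j) + ε * (2⁻¹) ^ (j + 1) := by
      refine ENNReal.lt_add_right (hfin' j) ?_
      exact (ENNReal.mul_pos (by exact_mod_cast hε.ne') (pow_ne_zero _ (by norm_num))).ne'
    rw [Hpre] at hlt
    rw [iInf_lt_iff] at hlt
    obtain ⟨t, ht⟩ := hlt
    rw [iInf_lt_iff] at ht
    obtain ⟨h1, ht⟩ := ht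
    rw [iInf_lt_iff] at ht
    obtain ⟨h2, ht⟩ := ht
    exact ⟨t, h1, h2, ht.le⟩
  choose t h1 h2 h3 using hex
  have hcov : (⋃ j, D j) ⊆ ⋃ p : ℕ × ℕ, t p.1 p.2 := by
    refine iUnion_subset fun j => (h1 j).trans (iUnion_subset fun i => ?_)
    exact subset_iUnion (fun p : ℕ × ℕ => t p.1 p.2) (j, i)
  have := Hpre_le_tsum (d := d) (r := r) (fun p : ℕ × ℕ => t p.1 p.2) hcov fun p => h2 p.1 p.2
  refine this.trans ?_
  rw [ENNReal.tsum_prod']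
  calc ∑' (j) (i), ⨆ _ : (t j i).Nonempty, diam (t j i) ^ d
      ≤ ∑' j, (Hpre d r (D j) + ε * (2⁻¹) ^ (j + 1)) := ENNReal.tsum_le_tsum h3
    _ = (∑' j, Hpre d r (D j)) + ε * ∑' j : ℕ, (2⁻¹) ^ (j + 1) := by
        rw [ENNReal.tsum_add, ENNReal.tsum_mul_left]
    _ ≤ (∑' j, Hpre d r (D j)) + ε := by
        gcongr
        nth_rewrite 2 [← mul_one (ε : ℝ≥0∞)]
        gcongr
        calc ∑' j : ℕ, (2⁻¹ : ℝ≥0∞) ^ (j + 1) ≤ ∑' j : ℕ, 2⁻¹ * (2⁻¹) ^ j := by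
              gcongr with j; rw [pow_succ, mul_comm]
          _ = 2⁻¹ * (1 - 2⁻¹)⁻¹ := by rw [ENNReal.tsum_mul_left, ENNReal.tsum_geometric]
          _ ≤ 1 := by norm_num [ENNReal.sub_half]






variable {n : ℕ}

/-- Dyadic cube at scale `j` (side `2⁻¹ ^ j`). -/
def cube (n : ℕ) (j : ℕ) (b : Fin n → ℤ) : Set (Fin n → ℝ) :=
  {y | ∀ c, ⌊y c * 2 ^ j⌋ = b c}

/-- The index of the dyadic cube of scale `j` containing `y`. -/
def floorv (j : ℕ) (y : Fin n → ℝ) : Fin n → ℤ := fun c => ⌊y c * 2 ^ j⌋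

theorem mem_cube_floorv (j : ℕ) (y : Fin n → ℝ) : y ∈ cube n j (floorv j y) := fun _ => rfl

theorem eq_floorv_of_mem {j : ℕ} {b : Fin n → ℤ} {y : Fin n → ℝ} (h : y ∈ cube n j b) :
    b = floorv j y := by
  funext c; exact (h c).symm

theorem abs_le_of_edist_le {x y : ℝ} {r : ℝ} (hr : 0 ≤ r)
    (h : edist x y ≤ ENNReal.ofReal r) : |x - y| ≤ r := by
  rw [edist_dist, Real.dist_eq] at h
  rwa [ENNReal.ofReal_le_ofReal_iff hr] at h

theorem half_pow_eq_ofReal (j : ℕ) :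
    (2⁻¹ : ℝ≥0∞) ^ j = ENNReal.ofReal ((2⁻¹ : ℝ) ^ j) := by
  rw [ENNReal.ofReal_pow (by norm_num)]
  congr 1
  rw [ENNReal.ofReal_inv_of_pos (by norm_num)]
  norm_num

theorem cube_diam (j : ℕ) (b : Fin n → ℤ) : diam (cube n j b) ≤ (2⁻¹ : ℝ≥0∞) ^ j := by
  refine diam_le fun y hy y' hy' => ?_
  rw [half_pow_eq_ofReal, edist_pi_def]
  refine Finset.sup_le fun c _ => ?_
  rw [edist_dist, Real.dist_eq, ENNReal.ofReal_le_ofReal_iff (by positivity)]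
  have h2 : (0:ℝ) < 2 ^ j := by positivity
  have h1 := (Int.floor_eq_iff (R := ℝ)).mp (hy c)
  have h1' := (Int.floor_eq_iff (R := ℝ)).mp (hy' c)
  rw [abs_le]
  have hinv : (2⁻¹:ℝ) ^ j = (2 ^ j)⁻¹ := by rw [inv_pow]
  have hb1 : (b c : ℝ) ≤ y c * 2 ^ j := h1.1
  have hb2 : y c * 2 ^ j < (b c : ℝ) + 1 := h1.2
  have hb3 : (b c : ℝ) ≤ y' c * 2 ^ j := h1'.1
  have hb4 : y' c * 2 ^ j < (b c : ℝ) + 1 := h1'.2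
  rw [hinv, ← one_div]
  constructor
  · rw [neg_le, neg_sub, le_div_iff₀ h2]
    nlinarith
  · rw [le_div_iff₀ h2]
    nlinarith

theorem exists_near_cube {j : ℕ} {w y : Fin n → ℝ} (h : edist y w ≤ (2⁻¹ : ℝ≥0∞) ^ j) :
    ∃ v : Fin n → Fin 3, floorv j y = fun c => floorv j w c + (v c : ℤ) - 1 := by
  have key : ∀ c, 0 ≤ floorv j y c - floorv j w c + 1 ∧ floorv j y c - floorv j w c + 1 < 3 := by
    intro c
    have hc : edist (y c) (w c) ≤ (2⁻¹ : ℝ≥0∞) ^ j := le_trans (edist_le_pi_edist y w c) h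
    rw [half_pow_eq_ofReal] at hc
    have habs : |y c - w c| ≤ (2⁻¹:ℝ) ^ j := abs_le_of_edist_le (by positivity) hc
    have h2 : (0:ℝ) < 2 ^ j := by positivity
    have hmul : |y c * 2 ^ j - w c * 2 ^ j| ≤ 1 := by
      rw [← sub_mul, abs_mul, abs_of_pos h2]
      calc |y c - w c| * 2 ^ j ≤ (2⁻¹:ℝ) ^ j * 2 ^ j := by gcongr
        _ = 1 := by rw [inv_pow]; field_simp
    rw [abs_le] at hmul
    have hup : ⌊y c * 2 ^ j⌋ ≤ ⌊w c * 2 ^ j⌋ + 1 := by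
      rw [← Int.floor_add_intCast (w c * 2 ^ j) 1]
      exact Int.floor_mono (by push_cast; linarith [hmul.2])
    have hlow : ⌊w c * 2 ^ j⌋ - 1 ≤ ⌊y c * 2 ^ j⌋ := by
      rw [← Int.floor_sub_intCast (w c * 2 ^ j) 1]
      exact Int.floor_mono (by push_cast; linarith [hmul.1])
    unfold floorv
    omega
  refine ⟨fun c => ⟨(floorv j y c - floorv j w c + 1).toNat, ?_⟩, ?_⟩
  · have := key c; omega
  · funext c
    have := key c
    have ht : ((floorv j y c - floorv j w c + 1).toNat : ℤ) = floorv j y c - floorv j w c + 1 :=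
      Int.toNat_of_nonneg (key c).1
    simp only [ht]
    ring





theorem half_pow_le {a b : ℕ} (h : a ≤ b) : (2⁻¹ : ℝ≥0∞) ^ b ≤ (2⁻¹ : ℝ≥0∞) ^ a :=
  pow_le_pow_of_le_one (zero_le) (by norm_num) h

theorem core {m n : ℕ} (σ τ ε : ℝ) (hσ : 0 ≤ σ) (hτ : 0 < τ) (hε : 0 < ε)
    (E' : Set ((Fin m → ℝ) × (Fin n → ℝ))) (A : Set (Fin n → ℝ)) (k J K : ℕ) (hkJ : k ≤ J)
    (hslice : ∀ p ∈ A, 1 ≤ Hpre τ ((2⁻¹ : ℝ≥0∞) ^ k) {a | (a, p) ∈ E'})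
    (U : ℕ → Set ((Fin m → ℝ) × (Fin n → ℝ))) (hcov : E' ⊆ ⋃ i, U i)
    (hdiam : ∀ i, diam (U i) ≤ (2⁻¹ : ℝ≥0∞) ^ J) :
    Hpre (σ + ε) ((2⁻¹ : ℝ≥0∞) ^ J) A ≤
      2 * (1 - (2⁻¹ : ℝ≥0∞) ^ ε)⁻¹ * 3 ^ n * 2 ^ (σ + τ) *
        ((∑' i, ⨆ _ : (U i).Nonempty, diam (U i) ^ (σ + τ)) +
          ∑' i : ℕ, ((2⁻¹ : ℝ≥0∞) ^ (J + i + K + 1)) ^ (σ + τ)) := by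
  have half_ne0 : (2⁻¹ : ℝ≥0∞) ≠ 0 := by norm_num
  have half_ne_top : (2⁻¹ : ℝ≥0∞) ≠ ⊤ := by norm_num
  have hp_ne0 : ∀ j : ℕ, ((2⁻¹ : ℝ≥0∞) ^ j) ≠ 0 := fun j => pow_ne_zero _ half_ne0
  have hp_ne_top : ∀ j : ℕ, ((2⁻¹ : ℝ≥0∞) ^ j) ≠ ⊤ := fun j => ENNReal.pow_ne_top half_ne_top
  set q : ℝ≥0∞ := (2⁻¹ : ℝ≥0∞) ^ ε with hq_def
  have hq_lt : q < 1 := ENNReal.rpow_lt_one (by norm_num) hε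
  have h1q_ne0 : 1 - q ≠ 0 := by
    rw [Ne, tsub_eq_zero_iff_le]
    exact not_le.mpr hq_lt
  have h1q_ne_top : (1 : ℝ≥0∞) - q ≠ ⊤ := ne_top_of_le_ne_top ENNReal.one_ne_top tsub_le_self
  -- choose points of U i
  have hzc : ∀ i : ℕ, ∃ x : (Fin m → ℝ) × (Fin n → ℝ), (U i).Nonempty → x ∈ U i := by
    intro i
    by_cases h : (U i).Nonempty
    · exact ⟨h.some, fun _ => h.some_mem⟩
    · exact ⟨default, fun hh => absurd hh h⟩
  choose z hz using hzc
  set bb : ℕ → ℝ≥0∞ := fun i => max (diam (U i)) ((2⁻¹ : ℝ≥0∞) ^ (J + i + K + 1)) with hbb_def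
  have hbb_pos : ∀ i, bb i ≠ 0 :=
    fun i => fun h => (hp_ne0 (J + i + K + 1)) (le_antisymm (h ▸ le_max_right _ _) (zero_le))
  have hbb_le : ∀ i, bb i ≤ (2⁻¹ : ℝ≥0∞) ^ J :=
    fun i => max_le (hdiam i) (half_pow_le (by omega))
  have hex : ∀ i, ∃ l, (2⁻¹ : ℝ≥0∞) ^ (J + l + 1) < bb i := by
    intro i
    obtain ⟨l, hl⟩ := ENNReal.exists_inv_two_pow_lt (hbb_pos i)
    exact ⟨l, lt_of_le_of_lt (half_pow_le (by omega)) hl⟩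
  set jj : ℕ → ℕ := fun i => J + Nat.find (hex i) with hjj_def
  have hjJ : ∀ i, J ≤ jj i := fun i => Nat.le_add_right _ _
  have hsize : ∀ i, (2⁻¹ : ℝ≥0∞) ^ (jj i) ≤ 2 * bb i := by
    intro i
    have hspec : (2⁻¹ : ℝ≥0∞) ^ (jj i + 1) < bb i := Nat.find_spec (hex i)
    have h21 : (2 : ℝ≥0∞) * 2⁻¹ = 1 := ENNReal.mul_inv_cancel (by norm_num) (by norm_num)
    calc (2⁻¹ : ℝ≥0∞) ^ (jj i) = 2 * (2⁻¹ : ℝ≥0∞) ^ (jj i + 1) := by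
          rw [pow_succ, ← mul_assoc, mul_comm (2 : ℝ≥0∞), mul_assoc, h21, mul_one]
      _ ≤ 2 * bb i := by gcongr
  have hUd : ∀ i, diam (U i) ≤ (2⁻¹ : ℝ≥0∞) ^ (jj i) := by
    intro i
    rcases Nat.eq_zero_or_pos (Nat.find (hex i)) with h0 | hpos
    · have : jj i = J := by simp only [hjj_def]; omega
      rw [this]; exact hdiam i
    · have hmin := Nat.find_min (hex i) (show Nat.find (hex i) - 1 < Nat.find (hex i) by omega)
      rw [not_lt] at hmin
      have hexp : J + (Nat.find (hex i) - 1) + 1 = jj i := by simp only [hjj_def]; omega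
      rw [hexp] at hmin
      exact le_trans (le_max_left _ _) hmin
  classical
  set base : ℕ → (Fin n → Fin 3) → (Fin n → ℤ) :=
    fun i v => fun c => floorv (jj i) ((z i).2) c + (v c : ℤ) - 1 with hbase_def
  set W : ℕ × (Fin n → Fin 3) → Set ((Fin m → ℝ) × (Fin n → ℝ)) :=
    fun iv => U iv.1 ∩ (Prod.snd ⁻¹' cube n (jj iv.1) (base iv.1 iv.2)) with hW_def
  have hWsub : ∀ iv, W iv ⊆ U iv.1 := fun iv => inter_subset_left
  have hWcube : ∀ iv, Prod.snd '' W iv ⊆ cube n (jj iv.1) (base iv.1 iv.2) := by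
    rintro iv p ⟨x, hx, rfl⟩
    exact hx.2
  have hWcov : E' ⊆ ⋃ iv : ℕ × (Fin n → Fin 3), W iv := by
    intro x hx
    obtain ⟨i, hi⟩ := mem_iUnion.mp (hcov hx)
    have hne : (U i).Nonempty := ⟨x, hi⟩
    have hed : edist x.2 (z i).2 ≤ (2⁻¹ : ℝ≥0∞) ^ (jj i) := by
      calc edist x.2 (z i).2 ≤ edist x (z i) := by
            rw [Prod.edist_eq]; exact le_max_right _ _
        _ ≤ diam (U i) := edist_le_diam_of_mem hi (hz i hne)
        _ ≤ _ := hUd i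
    obtain ⟨v, hv⟩ := exists_near_cube hed
    refine mem_iUnion.mpr ⟨(i, v), hi, ?_⟩
    intro c
    exact congrFun hv c
  -- slice inequality
  have hkey : ∀ p ∈ A,
      (1 : ℝ≥0∞) ≤ ∑' iv : ℕ × (Fin n → Fin 3),
        (if p ∈ Prod.snd '' W iv then 1 else 0) * ((2⁻¹ : ℝ≥0∞) ^ (jj iv.1)) ^ τ := by
    intro p hp
    set t : ℕ × (Fin n → Fin 3) → Set (Fin m → ℝ) := fun iv => {a | (a, p) ∈ W iv} with ht_def
    have hc : {a | (a, p) ∈ E'} ⊆ ⋃ iv, t iv := by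
      intro a ha
      obtain ⟨iv, h⟩ := mem_iUnion.mp (hWcov ha)
      exact mem_iUnion.mpr ⟨iv, h⟩
    have hdt : ∀ iv, diam (t iv) ≤ (2⁻¹ : ℝ≥0∞) ^ (jj iv.1) := by
      intro iv
      have hiso : Isometry (fun a : Fin m → ℝ => (a, p)) := by
        intro a b
        rw [Prod.edist_eq]
        simp [edist_self]
      have h1 : diam (t iv) ≤ diam (W iv) := by
        calc diam (t iv) = diam ((fun a : Fin m → ℝ => (a, p)) '' t iv) :=
              (hiso.ediam_image _).symm
          _ ≤ diam (W iv) := diam_mono (by rintro _ ⟨a, ha, rfl⟩; exact ha)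
      exact h1.trans ((diam_mono (hWsub iv)).trans (hUd iv.1))
    have hdt' : ∀ iv, diam (t iv) ≤ (2⁻¹ : ℝ≥0∞) ^ k :=
      fun iv => (hdt iv).trans (half_pow_le (hkJ.trans (hjJ iv.1)))
    refine (hslice p hp).trans ((Hpre_le_tsum t hc hdt').trans (ENNReal.tsum_le_tsum fun iv => ?_))
    by_cases hne : (t iv).Nonempty
    · have hpmem : p ∈ Prod.snd '' W iv := ⟨(hne.some, p), hne.some_mem, rfl⟩
      rw [if_pos hpmem, one_mul, iSup_pos hne]
      exact ENNReal.rpow_le_rpow (hdt iv) hτ.le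
    · rw [not_nonempty_iff_eq_empty] at hne
      simp [hne]
  set M : ℕ → ℝ≥0∞ := fun j => 2⁻¹ * (1 - q) * ((2⁻¹ : ℝ≥0∞) ^ j) ^ (ε - τ) with hM_def
  have hM_ne0 : ∀ j, M j ≠ 0 := by
    intro j
    refine mul_ne_zero (mul_ne_zero (by norm_num) h1q_ne0) ?_
    simp [ENNReal.rpow_eq_zero_iff, hp_ne0 j, hp_ne_top j]
  have hM_ne_top : ∀ j, M j ≠ ⊤ := by
    intro j
    refine ENNReal.mul_ne_top (ENNReal.mul_ne_top (by norm_num) h1q_ne_top) ?_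
    simp [ENNReal.rpow_eq_top_iff, hp_ne0 j, hp_ne_top j]
  have hq_pow : ∀ j : ℕ, ((2⁻¹ : ℝ≥0∞) ^ j) ^ (ε : ℝ) = q ^ j := by
    intro j
    rw [hq_def, ← ENNReal.rpow_natCast (2⁻¹ : ℝ≥0∞) j, ← ENNReal.rpow_mul, mul_comm,
      ENNReal.rpow_mul, ENNReal.rpow_natCast]
  set Nj : ℕ → (Fin n → ℝ) → ℝ≥0∞ := fun j p =>
    ∑' iv : ℕ × (Fin n → Fin 3),
      (if jj iv.1 = j ∧ p ∈ Prod.snd '' W iv then 1 else 0) with hNj_def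
  have hMsum : ∑' j : ℕ, M j * ((2⁻¹ : ℝ≥0∞) ^ j) ^ τ = 2⁻¹ := by
    have hterm : ∀ j : ℕ, M j * ((2⁻¹ : ℝ≥0∞) ^ j) ^ τ = 2⁻¹ * (1 - q) * q ^ j := by
      intro j
      rw [hM_def]
      rw [mul_assoc, ← ENNReal.rpow_add _ _ (hp_ne0 j) (hp_ne_top j), sub_add_cancel, hq_pow j]
    rw [tsum_congr hterm, ENNReal.tsum_mul_left, ENNReal.tsum_geometric, mul_assoc,
      ENNReal.mul_inv_cancel h1q_ne0 h1q_ne_top, mul_one]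
  have hAD : ∀ p ∈ A, ∃ j : ℕ, M j ≤ Nj j p := by
    intro p hp
    by_contra hno
    push_neg at hno
    have hregroup : ∑' iv : ℕ × (Fin n → Fin 3),
        (if p ∈ Prod.snd '' W iv then 1 else 0) * ((2⁻¹ : ℝ≥0∞) ^ (jj iv.1)) ^ τ
        = ∑' j : ℕ, Nj j p * ((2⁻¹ : ℝ≥0∞) ^ j) ^ τ := by
      have h1 : ∀ iv : ℕ × (Fin n → Fin 3),
          (if p ∈ Prod.snd '' W iv then 1 else 0) * ((2⁻¹ : ℝ≥0∞) ^ (jj iv.1)) ^ τ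
          = ∑' j : ℕ, (if jj iv.1 = j ∧ p ∈ Prod.snd '' W iv then 1 else 0)
              * ((2⁻¹ : ℝ≥0∞) ^ j) ^ τ := by
        intro iv
        symm
        rw [tsum_eq_single (jj iv.1) (fun j hj => by
          rw [if_neg (fun h => hj h.1.symm), zero_mul])]
        by_cases hmem : p ∈ Prod.snd '' W iv
        · rw [if_pos ⟨rfl, hmem⟩, if_pos hmem]
        · rw [if_neg (fun h => hmem h.2), if_neg hmem]
      rw [tsum_congr h1, ENNReal.tsum_comm]
      exact tsum_congr fun j => ENNReal.tsum_mul_right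
    have hle : (1 : ℝ≥0∞) ≤ 2⁻¹ := by
      rw [← hMsum]
      refine (hkey p hp).trans ?_
      rw [hregroup]
      exact ENNReal.tsum_le_tsum fun j => mul_le_mul_left (hno j).le _
    norm_num at hle
  set mult : ℕ → (Fin n → ℤ) → ℝ≥0∞ := fun j R =>
    ∑' iv : ℕ × (Fin n → Fin 3), (if jj iv.1 = j ∧ base iv.1 iv.2 = R then 1 else 0)
    with hmult_def
  set cnt : ℕ → ℝ≥0∞ := fun j =>
    ∑' iv : ℕ × (Fin n → Fin 3), (if jj iv.1 = j then 1 else 0) with hcnt_def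
  have hNle : ∀ j p, Nj j p ≤ mult j (floorv j p) := by
    intro j p
    refine ENNReal.tsum_le_tsum fun iv => ?_
    by_cases h1 : jj iv.1 = j ∧ p ∈ Prod.snd '' W iv
    · have hpc : p ∈ cube n j (base iv.1 iv.2) := by
        rw [← h1.1]
        exact hWcube iv h1.2
      rw [if_pos h1, if_pos ⟨h1.1, (eq_floorv_of_mem hpc).symm ▸ rfl⟩]
    · rw [if_neg h1]
      exact zero_le
  have hmultsum : ∀ j, ∑' R : Fin n → ℤ, mult j R = cnt j := by
    intro j
    rw [hmult_def, hcnt_def, ENNReal.tsum_comm]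
    refine tsum_congr fun iv => ?_
    by_cases h1 : jj iv.1 = j
    · rw [tsum_eq_single (base iv.1 iv.2) (fun R hR => by rw [if_neg (fun h => hR h.2.symm)])]
      rw [if_pos ⟨h1, rfl⟩, if_pos h1]
    · simp [h1]
  have hDj : ∀ j : ℕ, Hpre (σ + ε) ((2⁻¹ : ℝ≥0∞) ^ J) {p | M j ≤ Nj j p}
      ≤ (M j)⁻¹ * cnt j * ((2⁻¹ : ℝ≥0∞) ^ j) ^ (σ + ε) := by
    intro j
    by_cases hJj : J ≤ j
    · set S := {R : Fin n → ℤ | M j ≤ mult j R} with hS_def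
      have hcov' : {p | M j ≤ Nj j p} ⊆ ⋃ R : S, cube n j (R : Fin n → ℤ) := by
        intro p hp
        exact mem_iUnion.mpr ⟨⟨floorv j p, le_trans hp (hNle j p)⟩, mem_cube_floorv j p⟩
      refine (Hpre_le_tsum (fun R : S => cube n j (R : Fin n → ℤ)) hcov'
        (fun R => (cube_diam j _).trans (half_pow_le hJj))).trans ?_
      have hterm : ∀ R : S,
          (⨆ _ : (cube n j (R : Fin n → ℤ)).Nonempty, diam (cube n j (R : Fin n → ℤ)) ^ (σ + ε))
          ≤ (M j)⁻¹ * mult j (R : Fin n → ℤ) * ((2⁻¹ : ℝ≥0∞) ^ j) ^ (σ + ε) := by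
        intro R
        have h1 : (1 : ℝ≥0∞) ≤ (M j)⁻¹ * mult j (R : Fin n → ℤ) := by
          rw [← ENNReal.inv_mul_cancel (hM_ne0 j) (hM_ne_top j)]
          exact mul_le_mul_right R.2 _
        refine le_trans (iSup_le fun _ =>
          ENNReal.rpow_le_rpow (cube_diam j _) (by linarith)) ?_
        nth_rewrite 1 [← one_mul (((2⁻¹ : ℝ≥0∞) ^ j) ^ (σ + ε))]
        exact mul_le_mul_left h1 _
      refine (ENNReal.tsum_le_tsum hterm).trans ?_
      calc ∑' R : S, (M j)⁻¹ * mult j (R : Fin n → ℤ) * ((2⁻¹ : ℝ≥0∞) ^ j) ^ (σ + ε)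
          ≤ ∑' R : Fin n → ℤ, (M j)⁻¹ * mult j R * ((2⁻¹ : ℝ≥0∞) ^ j) ^ (σ + ε) :=
            ENNReal.tsum_comp_le_tsum_of_injective Subtype.val_injective _
        _ = (M j)⁻¹ * cnt j * ((2⁻¹ : ℝ≥0∞) ^ j) ^ (σ + ε) := by
            rw [ENNReal.tsum_mul_right, ENNReal.tsum_mul_left, hmultsum j]
    · have hcnt0 : cnt j = 0 := by
        rw [hcnt_def]
        refine ENNReal.tsum_eq_zero.mpr fun iv => if_neg ?_
        have := hjJ iv.1
        omega
      have hD : {p | M j ≤ Nj j p} = ∅ := by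
        rw [eq_empty_iff_forall_notMem]
        intro p hp
        have h1 : Nj j p ≤ cnt j :=
          le_trans (hNle j p) ((ENNReal.le_tsum (floorv j p)).trans (hmultsum j).le)
        rw [hcnt0] at h1
        exact hM_ne0 j (le_antisymm ((le_trans hp h1).trans (zero_le)) (zero_le))
      rw [hD, Hpre_empty]
      exact zero_le
  have hX_ne0 : ∀ j : ℕ, ((2⁻¹ : ℝ≥0∞) ^ j) ^ (ε - τ) ≠ 0 := fun j => by
    simp [ENNReal.rpow_eq_zero_iff, hp_ne0 j, hp_ne_top j]
  have hX_ne_top : ∀ j : ℕ, ((2⁻¹ : ℝ≥0∞) ^ j) ^ (ε - τ) ≠ ⊤ := fun j => by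
    simp [ENNReal.rpow_eq_top_iff, hp_ne0 j, hp_ne_top j]
  have hMinv : ∀ j : ℕ, (M j)⁻¹ = 2 * (1 - q)⁻¹ * ((2⁻¹ : ℝ≥0∞) ^ j) ^ (τ - ε) := by
    intro j
    rw [hM_def]
    rw [ENNReal.mul_inv (Or.inr (hX_ne_top j)) (Or.inr (hX_ne0 j)),
      ENNReal.mul_inv (Or.inl (by norm_num)) (Or.inl (by norm_num)), inv_inv,
      ← ENNReal.rpow_neg, neg_sub]
  have hchain : Hpre (σ + ε) ((2⁻¹ : ℝ≥0∞) ^ J) A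
      ≤ ∑' j : ℕ, Hpre (σ + ε) ((2⁻¹ : ℝ≥0∞) ^ J) {p | M j ≤ Nj j p} :=
    (Hpre_mono (fun p hp => mem_iUnion.mpr (hAD p hp))).trans (Hpre_iUnion_le _ _ _)
  have hstep2 : ∀ j : ℕ, (M j)⁻¹ * cnt j * ((2⁻¹ : ℝ≥0∞) ^ j) ^ (σ + ε)
      = 2 * (1 - q)⁻¹ * (cnt j * ((2⁻¹ : ℝ≥0∞) ^ j) ^ (σ + τ)) := by
    intro j
    have hco : ((2⁻¹ : ℝ≥0∞) ^ j) ^ (τ - ε) * ((2⁻¹ : ℝ≥0∞) ^ j) ^ (σ + ε)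
        = ((2⁻¹ : ℝ≥0∞) ^ j) ^ (σ + τ) := by
      rw [← ENNReal.rpow_add _ _ (hp_ne0 j) (hp_ne_top j)]
      ring_nf
    rw [hMinv j]
    calc 2 * (1 - q)⁻¹ * ((2⁻¹ : ℝ≥0∞) ^ j) ^ (τ - ε) * cnt j * ((2⁻¹ : ℝ≥0∞) ^ j) ^ (σ + ε)
        = 2 * (1 - q)⁻¹ *
            (cnt j * (((2⁻¹ : ℝ≥0∞) ^ j) ^ (τ - ε) * ((2⁻¹ : ℝ≥0∞) ^ j) ^ (σ + ε))) := by ring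
      _ = 2 * (1 - q)⁻¹ * (cnt j * ((2⁻¹ : ℝ≥0∞) ^ j) ^ (σ + τ)) := by rw [hco]
  refine hchain.trans ?_
  calc ∑' j : ℕ, Hpre (σ + ε) ((2⁻¹ : ℝ≥0∞) ^ J) {p | M j ≤ Nj j p}
      ≤ ∑' j : ℕ, (M j)⁻¹ * cnt j * ((2⁻¹ : ℝ≥0∞) ^ j) ^ (σ + ε) := ENNReal.tsum_le_tsum hDj
    _ = ∑' j : ℕ, 2 * (1 - q)⁻¹ * (cnt j * ((2⁻¹ : ℝ≥0∞) ^ j) ^ (σ + τ)) := tsum_congr hstep2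
    _ = 2 * (1 - q)⁻¹ * ∑' j : ℕ, cnt j * ((2⁻¹ : ℝ≥0∞) ^ j) ^ (σ + τ) := ENNReal.tsum_mul_left
    _ = 2 * (1 - q)⁻¹ *
        ∑' iv : ℕ × (Fin n → Fin 3), ((2⁻¹ : ℝ≥0∞) ^ (jj iv.1)) ^ (σ + τ) := by
        congr 1
        have h1 : ∀ j : ℕ, cnt j * ((2⁻¹ : ℝ≥0∞) ^ j) ^ (σ + τ)
            = ∑' iv : ℕ × (Fin n → Fin 3),
                (if jj iv.1 = j then 1 else 0) * ((2⁻¹ : ℝ≥0∞) ^ j) ^ (σ + τ) := by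
          intro j
          rw [hcnt_def, ENNReal.tsum_mul_right]
        rw [tsum_congr h1, ENNReal.tsum_comm]
        refine tsum_congr fun iv => ?_
        rw [tsum_eq_single (jj iv.1) (fun j hj => by rw [if_neg (fun h => hj h.symm), zero_mul])]
        rw [if_pos rfl, one_mul]
    _ = 2 * (1 - q)⁻¹ * ((3 : ℝ≥0∞) ^ n * ∑' i : ℕ, ((2⁻¹ : ℝ≥0∞) ^ (jj i)) ^ (σ + τ)) := by
        congr 1
        rw [ENNReal.tsum_prod']
        have h2 : ∀ i : ℕ, (∑' _v : Fin n → Fin 3, ((2⁻¹ : ℝ≥0∞) ^ (jj i)) ^ (σ + τ))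
            = (3 : ℝ≥0∞) ^ n * ((2⁻¹ : ℝ≥0∞) ^ (jj i)) ^ (σ + τ) := by
          intro i
          rw [tsum_fintype, Finset.sum_const, nsmul_eq_mul]
          congr 1
          simp [Fintype.card_fun]
        rw [tsum_congr h2, ENNReal.tsum_mul_left]
    _ ≤ 2 * (1 - q)⁻¹ * ((3 : ℝ≥0∞) ^ n * ((2 : ℝ≥0∞) ^ (σ + τ) *
          ((∑' i, ⨆ _ : (U i).Nonempty, diam (U i) ^ (σ + τ)) +
            ∑' i : ℕ, ((2⁻¹ : ℝ≥0∞) ^ (J + i + K + 1)) ^ (σ + τ)))) := by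
        gcongr
        have hre : (2 : ℝ≥0∞) ^ (σ + τ) *
            ((∑' i, ⨆ _ : (U i).Nonempty, diam (U i) ^ (σ + τ)) +
              ∑' i : ℕ, ((2⁻¹ : ℝ≥0∞) ^ (J + i + K + 1)) ^ (σ + τ))
            = ∑' i : ℕ, (2 : ℝ≥0∞) ^ (σ + τ) *
                ((⨆ _ : (U i).Nonempty, diam (U i) ^ (σ + τ)) +
                  ((2⁻¹ : ℝ≥0∞) ^ (J + i + K + 1)) ^ (σ + τ)) := by
          rw [← ENNReal.tsum_add, ENNReal.tsum_mul_left]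
        rw [hre]
        refine ENNReal.tsum_le_tsum fun i => ?_
        calc ((2⁻¹ : ℝ≥0∞) ^ (jj i)) ^ (σ + τ)
            ≤ (2 * bb i) ^ (σ + τ) := ENNReal.rpow_le_rpow (hsize i) (by linarith)
          _ = (2 : ℝ≥0∞) ^ (σ + τ) * (bb i) ^ (σ + τ) :=
              ENNReal.mul_rpow_of_nonneg _ _ (by linarith)
          _ ≤ (2 : ℝ≥0∞) ^ (σ + τ) *
              ((⨆ _ : (U i).Nonempty, diam (U i) ^ (σ + τ)) +
                ((2⁻¹ : ℝ≥0∞) ^ (J + i + K + 1)) ^ (σ + τ)) := by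
              gcongr
              rcases max_cases (diam (U i)) ((2⁻¹ : ℝ≥0∞) ^ (J + i + K + 1)) with
                ⟨hmx, _⟩ | ⟨hmx, _⟩
              · rw [show bb i = diam (U i) from hmx]
                by_cases hne : (U i).Nonempty
                · exact le_trans (le_iSup_of_le hne le_rfl) le_self_add
                · have hd0 : diam (U i) = 0 := by
                    rw [not_nonempty_iff_eq_empty] at hne
                    simp [hne, EMetric.diam]
                  rw [hd0, ENNReal.zero_rpow_of_pos (by linarith)]
                  exact zero_le
              · rw [show bb i = (2⁻¹ : ℝ≥0∞) ^ (J + i + K + 1) from hmx]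
                exact le_add_self
    _ = 2 * (1 - q)⁻¹ * 3 ^ n * 2 ^ (σ + τ) *
        ((∑' i, ⨆ _ : (U i).Nonempty, diam (U i) ^ (σ + τ)) +
          ∑' i : ℕ, ((2⁻¹ : ℝ≥0∞) ^ (J + i + K + 1)) ^ (σ + τ)) := by ring

end MarstrandAux

open MarstrandAux in
/-- Marstrand's slicing inequality: Hausdorff dimension of a set is at least the dimension of
its projection plus the infimal dimension of its fibers over the projection. -/
theorem stmt3 {m n : ℕ} (E : Set ((Fin m → ℝ) × (Fin n → ℝ))) (hE : E.Nonempty) :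
    dimH (Prod.snd '' E) + ⨅ p ∈ Prod.snd '' E, dimH {a : Fin m → ℝ | (a, p) ∈ E} ≤ dimH E := by
  classical
  obtain ⟨x0, hx0⟩ := hE
  have hx0p : x0.2 ∈ Prod.snd '' E := ⟨x0, hx0, rfl⟩
  have hsle : dimH (Prod.snd '' E) ≤ dimH E := LipschitzWith.prod_snd.dimH_image_le E
  have hslice_dim : ∀ p : Fin n → ℝ, dimH {a : Fin m → ℝ | (a, p) ∈ E} ≤ dimH E := by
    intro p
    have hiso : Isometry (fun a : Fin m → ℝ => (a, p)) := by
      intro a b; rw [Prod.edist_eq]; simp [edist_self]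
    calc dimH {a : Fin m → ℝ | (a, p) ∈ E}
        = dimH ((fun a : Fin m → ℝ => (a, p)) '' {a | (a, p) ∈ E}) := (hiso.dimH_image _).symm
      _ ≤ dimH E := dimH_mono (by rintro _ ⟨a, ha, rfl⟩; exact ha)
  have htle : (⨅ p ∈ Prod.snd '' E, dimH {a : Fin m → ℝ | (a, p) ∈ E}) ≤ dimH E :=
    (iInf₂_le _ hx0p).trans (hslice_dim x0.2)
  -- the main quantified estimate
  have main : ∀ σ τ : ℝ≥0, 0 < τ → (σ : ℝ≥0∞) < dimH (Prod.snd '' E) →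
      (τ : ℝ≥0∞) < (⨅ p ∈ Prod.snd '' E, dimH {a : Fin m → ℝ | (a, p) ∈ E}) →
      (σ : ℝ≥0∞) + τ ≤ dimH E := by
    intro σ τ hτpos hσs hτt
    have hsl : ∀ p ∈ Prod.snd '' E, (τ : ℝ≥0∞) < dimH {a : Fin m → ℝ | (a, p) ∈ E} :=
      fun p hp => hτt.trans_le (iInf₂_le _ hp)
    set A : ℕ → Set (Fin n → ℝ) := fun k =>
      {p | p ∈ Prod.snd '' E ∧
        1 ≤ Hpre (τ : ℝ) ((2⁻¹ : ℝ≥0∞) ^ k) {a : Fin m → ℝ | (a, p) ∈ E}} with hA_def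
    have hAcov : Prod.snd '' E = ⋃ k, A k := by
      apply Set.Subset.antisymm
      · intro p hp
        have hμ : μH[(τ : ℝ)] {a : Fin m → ℝ | (a, p) ∈ E} = ⊤ :=
          hausdorffMeasure_of_lt_dimH (hsl p hp)
        rw [hausdorffMeasure_eq_iSup_Hpre] at hμ
        have h1 : (1 : ℝ≥0∞) < ⨆ (r : ℝ≥0∞) (_ : 0 < r),
            Hpre (τ : ℝ) r {a : Fin m → ℝ | (a, p) ∈ E} := by
          rw [hμ]; exact ENNReal.one_lt_top
        rw [lt_iSup_iff] at h1
        obtain ⟨r, h1⟩ := h1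
        rw [lt_iSup_iff] at h1
        obtain ⟨hr, h1⟩ := h1
        obtain ⟨k, hk⟩ := ENNReal.exists_inv_two_pow_lt hr.ne'
        exact Set.mem_iUnion.mpr ⟨k, hp, le_trans h1.le (Hpre_anti hk.le)⟩
      · exact Set.iUnion_subset fun k p hp => hp.1
    obtain ⟨k, hk⟩ : ∃ k, (σ : ℝ≥0∞) < dimH (A k) := by
      rw [hAcov, dimH_iUnion, lt_iSup_iff] at hσs
      exact hσs
    obtain ⟨ε, hε_pos, hεk⟩ : ∃ ε : ℝ≥0, 0 < ε ∧ (σ : ℝ≥0∞) + ε < dimH (A k) :=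
      ENNReal.lt_iff_exists_add_pos_lt.mp hk
    have hμA : μH[(σ : ℝ) + (ε : ℝ)] (A k) = ⊤ := by
      have h1 : ((σ + ε : ℝ≥0) : ℝ≥0∞) < dimH (A k) := by push_cast; exact hεk
      have h2 := hausdorffMeasure_of_lt_dimH h1
      rwa [show ((σ + ε : ℝ≥0) : ℝ) = (σ : ℝ) + (ε : ℝ) by push_cast; ring] at h2
    obtain ⟨r₀, hr₀, h1A⟩ : ∃ r₀ : ℝ≥0∞, 0 < r₀ ∧
        1 < Hpre ((σ : ℝ) + (ε : ℝ)) r₀ (A k) := by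
      rw [hausdorffMeasure_eq_iSup_Hpre] at hμA
      have h1 : (1 : ℝ≥0∞) < ⨆ (r : ℝ≥0∞) (_ : 0 < r),
          Hpre ((σ : ℝ) + (ε : ℝ)) r (A k) := by
        rw [hμA]; exact ENNReal.one_lt_top
      rw [lt_iSup_iff] at h1
      obtain ⟨r, h1⟩ := h1
      rw [lt_iSup_iff] at h1
      obtain ⟨hr, h1⟩ := h1
      exact ⟨r, hr, h1⟩
    have hmin_ne : min r₀ ((2⁻¹ : ℝ≥0∞) ^ k) ≠ 0 := by
      simp only [Ne, min_eq_iff, not_or]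
      constructor
      · rintro ⟨h, -⟩; exact hr₀.ne' h
      · rintro ⟨h, -⟩; exact pow_ne_zero k (by norm_num : (2⁻¹ : ℝ≥0∞) ≠ 0) h
    obtain ⟨J, hJ⟩ := ENNReal.exists_inv_two_pow_lt hmin_ne
    have hJr : (2⁻¹ : ℝ≥0∞) ^ J ≤ r₀ := hJ.le.trans (min_le_left _ _)
    have hkJ : k ≤ J := by
      by_contra h
      push_neg at h
      exact absurd (lt_of_le_of_lt (half_pow_le h.le) (hJ.trans_le (min_le_right _ _)))
        (lt_irrefl _)
    set E' : Set ((Fin m → ℝ) × (Fin n → ℝ)) := {x | x ∈ E ∧ x.2 ∈ A k} with hE'_def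
    have hsliceE' : ∀ p ∈ A k,
        1 ≤ Hpre (τ : ℝ) ((2⁻¹ : ℝ≥0∞) ^ k) {a : Fin m → ℝ | (a, p) ∈ E'} := by
      intro p hp
      have hseteq : {a : Fin m → ℝ | (a, p) ∈ E'} = {a : Fin m → ℝ | (a, p) ∈ E} := by
        ext a
        simp only [hE'_def, Set.mem_setOf_eq, and_iff_left_iff_imp]
        exact fun _ => hp
      rw [hseteq]
      exact hp.2
    set q : ℝ≥0∞ := (2⁻¹ : ℝ≥0∞) ^ (ε : ℝ) with hq_def
    have hq_lt : q < 1 := ENNReal.rpow_lt_one (by norm_num) (by exact_mod_cast hε_pos)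
    have h1q_ne0 : 1 - q ≠ 0 := by
      rw [Ne, tsub_eq_zero_iff_le]; exact not_le.mpr hq_lt
    have h1q_ne_top : (1 : ℝ≥0∞) - q ≠ ⊤ := ne_top_of_le_ne_top ENNReal.one_ne_top tsub_le_self
    set C : ℝ≥0∞ := 2 * (1 - q)⁻¹ * (3 : ℝ≥0∞) ^ n * (2 : ℝ≥0∞) ^ ((σ : ℝ) + (τ : ℝ))
      with hC_def
    have h2r_ne0 : (2 : ℝ≥0∞) ^ ((σ : ℝ) + (τ : ℝ)) ≠ 0 := by
      simp [ENNReal.rpow_eq_zero_iff]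
    have h2r_ne_top : (2 : ℝ≥0∞) ^ ((σ : ℝ) + (τ : ℝ)) ≠ ⊤ := by
      simp [ENNReal.rpow_eq_top_iff]
    have hC_ne0 : C ≠ 0 := by
      refine mul_ne_zero (mul_ne_zero (mul_ne_zero (by norm_num) ?_) (by positivity)) h2r_ne0
      exact ENNReal.inv_ne_zero.mpr h1q_ne_top
    have hC_ne_top : C ≠ ⊤ := by
      refine ENNReal.mul_ne_top (ENNReal.mul_ne_top (ENNReal.mul_ne_top (by norm_num) ?_)
        (by simp)) h2r_ne_top
      exact ENNReal.inv_ne_top.mpr h1q_ne0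
    have hστ_pos : (0 : ℝ) < (σ : ℝ) + (τ : ℝ) := by positivity
    set w : ℝ≥0∞ := (2⁻¹ : ℝ≥0∞) ^ ((σ : ℝ) + (τ : ℝ)) with hw_def
    have hw_lt : w < 1 := ENNReal.rpow_lt_one (by norm_num) hστ_pos
    have hw1_ne0 : 1 - w ≠ 0 := by rw [Ne, tsub_eq_zero_iff_le]; exact not_le.mpr hw_lt
    have hPle : ∀ K : ℕ, (∑' i : ℕ, ((2⁻¹ : ℝ≥0∞) ^ (J + i + K + 1)) ^ ((σ : ℝ) + (τ : ℝ)))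
        ≤ w ^ K * (1 - w)⁻¹ := by
      intro K
      have hterm : ∀ i : ℕ,
          ((2⁻¹ : ℝ≥0∞) ^ (J + i + K + 1)) ^ ((σ : ℝ) + (τ : ℝ)) ≤ w ^ K * w ^ i := by
        intro i
        have heq : ((2⁻¹ : ℝ≥0∞) ^ (J + i + K + 1)) ^ ((σ : ℝ) + (τ : ℝ))
            = w ^ (J + i + K + 1) := by
          rw [hw_def, ← ENNReal.rpow_natCast (2⁻¹ : ℝ≥0∞) (J + i + K + 1),
            ← ENNReal.rpow_mul, mul_comm, ENNReal.rpow_mul, ENNReal.rpow_natCast]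
        rw [heq]
        calc w ^ (J + i + K + 1) = w ^ (J + 1) * (w ^ K * w ^ i) := by ring
          _ ≤ 1 * (w ^ K * w ^ i) := by
              gcongr
              exact pow_le_one' (ENNReal.rpow_le_one (by norm_num) hστ_pos.le) _
          _ = w ^ K * w ^ i := one_mul _
      calc (∑' i : ℕ, ((2⁻¹ : ℝ≥0∞) ^ (J + i + K + 1)) ^ ((σ : ℝ) + (τ : ℝ)))
          ≤ ∑' i : ℕ, w ^ K * w ^ i := ENNReal.tsum_le_tsum hterm
        _ = w ^ K * (1 - w)⁻¹ := by rw [ENNReal.tsum_mul_left, ENNReal.tsum_geometric]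
    obtain ⟨K, hK⟩ : ∃ K : ℕ, C *
        (∑' i : ℕ, ((2⁻¹ : ℝ≥0∞) ^ (J + i + K + 1)) ^ ((σ : ℝ) + (τ : ℝ))) ≤ 2⁻¹ := by
      have h1 : Filter.Tendsto (fun K : ℕ => w ^ K) Filter.atTop (nhds 0) :=
        ENNReal.tendsto_pow_atTop_nhds_zero_of_lt_one hw_lt
      have h2 : Filter.Tendsto (fun K : ℕ => w ^ K * ((1 - w)⁻¹ * C)) Filter.atTop (nhds 0) := by
        have := ENNReal.Tendsto.mul_const h1
          (b := (1 - w)⁻¹ * C) (Or.inr (ENNReal.mul_ne_top (ENNReal.inv_ne_top.mpr hw1_ne0)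
            hC_ne_top))
        simpa using this
      have h3 := h2.eventually_lt_const (show (0 : ℝ≥0∞) < 2⁻¹ by norm_num)
      obtain ⟨K, hK⟩ := h3.exists
      refine ⟨K, ?_⟩
      calc C * (∑' i : ℕ, ((2⁻¹ : ℝ≥0∞) ^ (J + i + K + 1)) ^ ((σ : ℝ) + (τ : ℝ)))
          ≤ C * (w ^ K * (1 - w)⁻¹) := by gcongr; exact hPle K
        _ = w ^ K * ((1 - w)⁻¹ * C) := by ring
        _ ≤ 2⁻¹ := hK.le
    have hA1 : (1 : ℝ≥0∞) ≤ Hpre ((σ : ℝ) + (ε : ℝ)) ((2⁻¹ : ℝ≥0∞) ^ J) (A k) :=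
      le_trans h1A.le (Hpre_anti hJr)
    have hHE' : 2⁻¹ * C⁻¹ ≤ Hpre ((σ : ℝ) + (τ : ℝ)) ((2⁻¹ : ℝ≥0∞) ^ J) E' := by
      rw [Hpre]
      refine le_iInf fun U => le_iInf fun hUcov => le_iInf fun hUdiam => ?_
      have h1 := core (σ : ℝ) (τ : ℝ) (ε : ℝ) (σ : ℝ≥0).2 (by exact_mod_cast hτpos)
        (by exact_mod_cast hε_pos) E' (A k) k J K hkJ hsliceE' U hUcov hUdiam
      set T : ℝ≥0∞ := ∑' i, ⨆ _ : (U i).Nonempty, EMetric.diam (U i) ^ ((σ : ℝ) + (τ : ℝ))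
        with hT_def
      have h2 : (1 : ℝ≥0∞) ≤ C * T + 2⁻¹ := by
        calc (1 : ℝ≥0∞) ≤ Hpre ((σ : ℝ) + (ε : ℝ)) ((2⁻¹ : ℝ≥0∞) ^ J) (A k) := hA1
          _ ≤ C * (T + ∑' i : ℕ, ((2⁻¹ : ℝ≥0∞) ^ (J + i + K + 1)) ^ ((σ : ℝ) + (τ : ℝ))) := h1
          _ = C * T + C * (∑' i : ℕ, ((2⁻¹ : ℝ≥0∞) ^ (J + i + K + 1)) ^ ((σ : ℝ) + (τ : ℝ))) :=
              mul_add _ _ _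
          _ ≤ C * T + 2⁻¹ := by gcongr
      have h4 : (2⁻¹ : ℝ≥0∞) ≤ C * T := by
        have h5 : (1 : ℝ≥0∞) - 2⁻¹ ≤ C * T := tsub_le_iff_right.mpr h2
        calc (2⁻¹ : ℝ≥0∞) = 1 - 2⁻¹ := by
              rw [← one_div, ENNReal.sub_half ENNReal.one_ne_top, one_div]
          _ ≤ C * T := h5
      calc 2⁻¹ * C⁻¹ ≤ (C * T) * C⁻¹ := by gcongr
        _ = T * (C * C⁻¹) := by ring
        _ = T := by rw [ENNReal.mul_inv_cancel hC_ne0 hC_ne_top, mul_one]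
    have hμE' : μH[(σ : ℝ) + (τ : ℝ)] E' ≠ 0 := by
      have hle : 2⁻¹ * C⁻¹ ≤ μH[(σ : ℝ) + (τ : ℝ)] E' := by
        rw [hausdorffMeasure_eq_iSup_Hpre]
        exact le_trans hHE' (le_iSup₂_of_le ((2⁻¹ : ℝ≥0∞) ^ J)
          (pos_iff_ne_zero.mpr (pow_ne_zero _ (by norm_num))) le_rfl)
      intro h0
      rw [h0, nonpos_iff_eq_zero] at hle
      exact (mul_ne_zero (by norm_num) (ENNReal.inv_ne_zero.mpr hC_ne_top)) hle
    have hdim : ((σ + τ : ℝ≥0) : ℝ≥0∞) ≤ dimH E' := by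
      by_contra hlt
      push_neg at hlt
      have h0 := hausdorffMeasure_of_dimH_lt hlt
      rw [show ((σ + τ : ℝ≥0) : ℝ) = (σ : ℝ) + (τ : ℝ) by push_cast; ring] at h0
      exact hμE' h0
    calc (σ : ℝ≥0∞) + τ = ((σ + τ : ℝ≥0) : ℝ≥0∞) := by push_cast; ring
      _ ≤ dimH E' := hdim
      _ ≤ dimH E := dimH_mono fun x hx => hx.1
  -- conclude from `main`
  rcases eq_or_ne (⨅ p ∈ Prod.snd '' E, dimH {a : Fin m → ℝ | (a, p) ∈ E}) 0 with ht0 | ht0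
  · rw [ht0, add_zero]; exact hsle
  have hEfin : dimH (Set.univ : Set ((Fin m → ℝ) × (Fin n → ℝ))) ≠ ⊤ := by
    rw [Real.dimH_univ_eq_finrank]
    exact ENNReal.natCast_ne_top _
  have hD_ne : dimH E ≠ ⊤ := ne_top_of_le_ne_top hEfin (dimH_mono (Set.subset_univ E))
  have hs_ne : dimH (Prod.snd '' E) ≠ ⊤ := ne_top_of_le_ne_top hD_ne hsle
  have ht_ne : (⨅ p ∈ Prod.snd '' E, dimH {a : Fin m → ℝ | (a, p) ∈ E}) ≠ ⊤ :=
    ne_top_of_le_ne_top hD_ne htle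
  set a : ℝ≥0 := (dimH (Prod.snd '' E)).toNNReal with ha_def
  set b : ℝ≥0 := (⨅ p ∈ Prod.snd '' E, dimH {a : Fin m → ℝ | (a, p) ∈ E}).toNNReal with hb_def
  have has : dimH (Prod.snd '' E) = (a : ℝ≥0∞) := (ENNReal.coe_toNNReal hs_ne).symm
  have hbt : (⨅ p ∈ Prod.snd '' E, dimH {a : Fin m → ℝ | (a, p) ∈ E}) = (b : ℝ≥0∞) :=
    (ENNReal.coe_toNNReal ht_ne).symm
  have hb_pos : 0 < b := ENNReal.toNNReal_pos ht0 ht_ne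
  refine ENNReal.le_of_forall_pos_le_add fun δ hδ _ => ?_
  set e : ℝ≥0 := min (δ / 2) (b / 2) with he_def
  have he_pos : 0 < e := lt_min (by positivity) (by positivity)
  have heδ : e + e ≤ δ := by
    calc e + e ≤ δ / 2 + δ / 2 := add_le_add (min_le_left _ _) (min_le_left _ _)
      _ = δ := add_halves δ
  have heb : e < b := lt_of_le_of_lt (min_le_right _ _) (NNReal.half_lt_self hb_pos.ne')
  have hτ'pos : 0 < b - e := tsub_pos_of_lt heb
  have hτ'lt : ((b - e : ℝ≥0) : ℝ≥0∞) < ⨅ p ∈ Prod.snd '' E, dimH {a : Fin m → ℝ | (a, p) ∈ E} := by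
    rw [hbt]
    exact_mod_cast tsub_lt_self (he_pos.trans heb) he_pos
  have hb_le : (b : ℝ≥0∞) ≤ ((b - e : ℝ≥0) : ℝ≥0∞) + (e : ℝ≥0∞) := by exact_mod_cast le_tsub_add
  by_cases hse : dimH (Prod.snd '' E) ≤ (e : ℝ≥0∞)
  · calc dimH (Prod.snd '' E) + ⨅ p ∈ Prod.snd '' E, dimH {a : Fin m → ℝ | (a, p) ∈ E}
        ≤ (e : ℝ≥0∞) + dimH E := add_le_add hse htle
      _ ≤ dimH E + δ := by
          rw [add_comm]
          gcongr
          exact_mod_cast (min_le_left _ _).trans (NNReal.half_le_self _)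
  · push_neg at hse
    have hea : e < a := by
      rw [has] at hse
      exact_mod_cast hse
    have hσ'lt : ((a - e : ℝ≥0) : ℝ≥0∞) < dimH (Prod.snd '' E) := by
      rw [has]
      exact_mod_cast tsub_lt_self (he_pos.trans hea) he_pos
    have ha_le : (a : ℝ≥0∞) ≤ ((a - e : ℝ≥0) : ℝ≥0∞) + (e : ℝ≥0∞) := by exact_mod_cast le_tsub_add
    have hmain := main (a - e) (b - e) hτ'pos hσ'lt hτ'lt
    calc dimH (Prod.snd '' E) + ⨅ p ∈ Prod.snd '' E, dimH {a : Fin m → ℝ | (a, p) ∈ E}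
        = (a : ℝ≥0∞) + (b : ℝ≥0∞) := by rw [has, hbt]
      _ ≤ (((a - e : ℝ≥0) : ℝ≥0∞) + (e : ℝ≥0∞)) + (((b - e : ℝ≥0) : ℝ≥0∞) + (e : ℝ≥0∞)) :=
          add_le_add ha_le hb_le
      _ = (((a - e : ℝ≥0) : ℝ≥0∞) + ((b - e : ℝ≥0) : ℝ≥0∞)) + ((e : ℝ≥0∞) + (e : ℝ≥0∞)) := by
          ring
      _ ≤ dimH E + δ := add_le_add hmain (by exact_mod_cast heδ)
end
end

section
/- Let 𝔤 be a finite-dimensional real Lie algebra and a₀ ∈ 𝔤 with ad_{a₀} diagonalizable over ℂ. If tr(ad_{a₀}) = 0 and the subalgebra 𝔫 = {b : sup_t ‖e^{t·ad_{a₀}} b‖ < ∞} is a proper subspace of 𝔤, then both 𝔥 = {b : e^{t·ad_{a₀}} b → 0 as t → -∞} and 𝔥⁻ = {b : e^{t·ad_{a₀}} b → 0 as t → +∞} are nonzero. -/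
set_option maxHeartbeats 1000000


open Filter Topology

open NormedSpace in
lemma exp_comm_aux {X Y : Type*} [NormedAddCommGroup X] [NormedSpace ℝ X] [CompleteSpace X]
    [NormedAddCommGroup Y] [NormedSpace ℝ Y] [CompleteSpace Y]
    (f : X →L[ℝ] Y) (A : X →L[ℝ] X) (B : Y →L[ℝ] Y)
    (h : ∀ x, f (A x) = B (f x)) (x : X) :
    f (exp A x) = exp B (f x) := by
  have hn : ∀ (k : ℕ) (y : X), f ((A ^ k) y) = (B ^ k) (f y) := by
    intro k
    induction k with
    | zero => intro y; simp
    | succ k ih =>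
      intro y
      calc f ((A ^ (k + 1)) y) = f ((A ^ k) (A y)) := by
            rw [pow_succ]; simp [ContinuousLinearMap.mul_apply]
        _ = (B ^ k) (f (A y)) := ih _
        _ = (B ^ k) (B (f y)) := by rw [h]
        _ = (B ^ (k + 1)) (f y) := by rw [pow_succ]; simp [ContinuousLinearMap.mul_apply]
  have h1 : HasSum (fun k : ℕ => ((k.factorial : ℝ))⁻¹ • (B ^ k) (f x)) (f (exp A x)) := by
    have h2 := (ContinuousLinearMap.apply ℝ X x).hasSum (exp_series_hasSum_exp' (𝕂 := ℝ) A)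
    have h3 := f.hasSum h2
    have hf : (fun k : ℕ => ((k.factorial : ℝ))⁻¹ • (B ^ k) (f x))
        = fun b => f ((ContinuousLinearMap.apply ℝ X x) ((b.factorial : ℝ)⁻¹ • A ^ b)) := by
      funext k
      rw [ContinuousLinearMap.apply_apply, ContinuousLinearMap.smul_apply, map_smul, hn]
    rw [hf]
    exact h3
  have h4 : HasSum (fun k : ℕ => ((k.factorial : ℝ))⁻¹ • (B ^ k) (f x)) (exp B (f x)) := by
    simpa using (ContinuousLinearMap.apply ℝ Y (f x)).hasSum (exp_series_hasSum_exp' (𝕂 := ℝ) B)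
  exact h1.unique h4

open NormedSpace in
lemma exp_eig_aux {n : ℕ} (B : (Fin n → ℂ) →L[ℝ] (Fin n → ℂ))
    (hB : ∀ (c : ℂ) (w : Fin n → ℂ), B (c • w) = c • B w)
    (μ : ℂ) (v : Fin n → ℂ) (hv : B v = μ • v) :
    exp B v = Complex.exp μ • v := by
  have hn : ∀ k : ℕ, (B ^ k) v = μ ^ k • v := by
    intro k
    induction k with
    | zero => simp
    | succ k ih =>
      calc (B ^ (k + 1)) v = B ((B ^ k) v) := by
            rw [pow_succ']; simp [ContinuousLinearMap.mul_apply]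
        _ = B (μ ^ k • v) := by rw [ih]
        _ = μ ^ k • B v := hB _ _
        _ = μ ^ (k + 1) • v := by rw [hv, smul_smul, pow_succ]
  have h1 : HasSum (fun k : ℕ => (((k.factorial : ℂ))⁻¹ * μ ^ k) • v) (exp B v) := by
    have h2 := (ContinuousLinearMap.apply ℝ (Fin n → ℂ) v).hasSum
      (exp_series_hasSum_exp' (𝕂 := ℝ) B)
    have h3 : ∀ k : ℕ, ((k.factorial : ℝ))⁻¹ • (B ^ k) v
        = (((k.factorial : ℂ))⁻¹ * μ ^ k) • v := by
      intro k
      rw [hn k, ← smul_assoc]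
      congr 1
      rw [Complex.real_smul]
      push_cast
      ring
    have hf : (fun k : ℕ => (((k.factorial : ℂ))⁻¹ * μ ^ k) • v)
        = fun b => (ContinuousLinearMap.apply ℝ (Fin n → ℂ) v) ((b.factorial : ℝ)⁻¹ • B ^ b) := by
      funext k
      rw [← h3 k]
      rfl
    rw [hf]
    exact h2
  have h4 : HasSum (fun k : ℕ => (((k.factorial : ℂ))⁻¹ * μ ^ k) • v) (Complex.exp μ • v) := by
    have h5 : HasSum (fun k : ℕ => ((k.factorial : ℂ))⁻¹ * μ ^ k) (Complex.exp μ) := by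
      simpa [Complex.exp_eq_exp_ℂ, smul_eq_mul] using exp_series_hasSum_exp' (𝕂 := ℂ) μ
    exact h5.smul_const v
  exact h1.unique h4

/-- If `ad a₀` is diagonalizable over `ℂ` with zero trace and the neutral subalgebra `𝔫` is
proper, then both the expanding subalgebra `𝔥` and the contracting subalgebra `𝔥⁻` are nonzero. -/
theorem stmt5 {L : Type*} [LieRing L] [LieAlgebra ℝ L] [Module.Finite ℝ L]
    {n : ℕ} (e : L ≃ₗ[ℝ] (Fin n → ℝ)) (a₀ : L)
    (A : (Fin n → ℝ) →L[ℝ] (Fin n → ℝ))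
    (hA : ∀ b : L, A (e b) = e ⁅a₀, b⁆)
    (hss : Squarefree (minpoly ℝ (A.toLinearMap : Module.End ℝ (Fin n → ℝ))))
    (htr : LinearMap.trace ℝ (Fin n → ℝ) A.toLinearMap = 0)
    (𝔥 𝔫 𝔥' : Set L)
    (h𝔥 : 𝔥 = {b | Tendsto (fun t : ℝ => NormedSpace.exp (t • A) (e b)) atBot (𝓝 0)})
    (h𝔫 : 𝔫 = {b | ∃ C : ℝ, ∀ t : ℝ, ‖NormedSpace.exp (t • A) (e b)‖ ≤ C})
    (h𝔥' : 𝔥' = {b | Tendsto (fun t : ℝ => NormedSpace.exp (t • A) (e b)) atTop (𝓝 0)})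
    (h𝔫prop : 𝔫 ≠ Set.univ) :
    (∃ b ∈ 𝔥, b ≠ 0) ∧ (∃ b ∈ 𝔥', b ≠ 0) := by
  classical
  set M : Matrix (Fin n) (Fin n) ℝ := LinearMap.toMatrixAlgEquiv' A.toLinearMap with hM
  set Mc : Matrix (Fin n) (Fin n) ℂ := M.map (algebraMap ℝ ℂ) with hMc
  set E : Module.End ℂ (Fin n → ℂ) := Matrix.toLinAlgEquiv' Mc with hE
  set B' : (Fin n → ℂ) →L[ℝ] (Fin n → ℂ) :=
    (LinearMap.toContinuousLinearMap E).restrictScalars ℝ with hB'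
  have hB'app : ∀ w, B' w = Mc.mulVec w := by
    intro w
    calc B' w = E w := rfl
      _ = Mc.mulVec w := by rw [hE, Matrix.toLinAlgEquiv'_apply]
  have hB'smul : ∀ (c : ℂ) (w : Fin n → ℂ), B' (c • w) = c • B' w := by
    intro c w
    rw [hB'app, hB'app, Matrix.mulVec_smul]
  have hAapp : ∀ x, A x = M.mulVec x := by
    intro x
    rw [← Matrix.toLinAlgEquiv'_apply, hM, Matrix.toLinAlgEquiv'_toMatrixAlgEquiv']
    rfl
  set J : (Fin n → ℝ) →L[ℝ] (Fin n → ℂ) :=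
    ContinuousLinearMap.pi fun i => Complex.ofRealCLM.comp (ContinuousLinearMap.proj i) with hJ
  have hJapp : ∀ (x : Fin n → ℝ) (i : Fin n), J x i = (x i : ℂ) := fun x i => rfl
  set Cj : (Fin n → ℂ) →L[ℝ] (Fin n → ℂ) :=
    ContinuousLinearMap.pi fun i =>
      (Complex.conjCLE : ℂ →L[ℝ] ℂ).comp (ContinuousLinearMap.proj i) with hCj
  have hCapp : ∀ (w : Fin n → ℂ) (i : Fin n), Cj w i = (starRingEnd ℂ) (w i) := fun w i => rfl
  have hJA : ∀ x, J (A x) = B' (J x) := by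
    intro x
    funext i
    rw [hJapp, hB'app, hAapp]
    simp only [Matrix.mulVec, dotProduct, hMc, Matrix.map_apply, hJapp,
      Complex.coe_algebraMap]
    push_cast
    rfl
  have hCB : ∀ w, Cj (B' w) = B' (Cj w) := by
    intro w
    funext i
    rw [hCapp, hB'app, hB'app]
    simp only [Matrix.mulVec, dotProduct, hMc, Matrix.map_apply, map_sum, map_mul,
      Complex.coe_algebraMap, Complex.conj_ofReal, hCapp]
  have hJnorm : ∀ x, ‖J x‖ = ‖x‖ := by
    intro x
    rw [Pi.norm_def, Pi.norm_def]
    congr 1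
    refine Finset.sup_congr rfl fun i _ => ?_
    rw [hJapp]
    simp [nnnorm, Complex.norm_real]
  have hCnorm : ∀ w, ‖Cj w‖ = ‖w‖ := by
    intro w
    rw [Pi.norm_def, Pi.norm_def]
    congr 1
    refine Finset.sup_congr rfl fun i _ => ?_
    rw [hCapp]
    simp
  have hexpJ : ∀ (t : ℝ) (x : Fin n → ℝ),
      J (NormedSpace.exp (t • A) x) = NormedSpace.exp (t • B') (J x) := by
    intro t x
    refine exp_comm_aux J (t • A) (t • B') (fun y => ?_) x
    simp only [ContinuousLinearMap.smul_apply, map_smul, hJA]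
  have hexpC : ∀ (t : ℝ) (w : Fin n → ℂ),
      Cj (NormedSpace.exp (t • B') w) = NormedSpace.exp (t • B') (Cj w) := by
    intro t w
    refine exp_comm_aux Cj (t • B') (t • B') (fun y => ?_) w
    simp only [ContinuousLinearMap.smul_apply, map_smul, hCB]
  have hexpSmul : ∀ (c : ℂ) (t : ℝ) (w : Fin n → ℂ),
      NormedSpace.exp (t • B') (c • w) = c • NormedSpace.exp (t • B') w := by
    intro c t w
    have h := exp_comm_aux (c • ContinuousLinearMap.id ℝ (Fin n → ℂ)) (t • B') (t • B')
      (fun y => by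
        simp only [ContinuousLinearMap.smul_apply, ContinuousLinearMap.id_apply, map_smul,
          hB'smul]) w
    simpa using h.symm
  have hsmulB' : ∀ (t : ℝ) (c : ℂ) (w : Fin n → ℂ), (t • B') (c • w) = c • (t • B') w := by
    intro t c w
    simp only [ContinuousLinearMap.smul_apply, hB'smul]
    rw [smul_comm]
  have hEig : ∀ (μ : ℂ) (v : Fin n → ℂ), v ∈ E.eigenspace μ → ∀ t : ℝ,
      NormedSpace.exp (t • B') v = Complex.exp (t * μ) • v := by
    intro μ v hv t
    have hv' : E v = μ • v := Module.End.mem_eigenspace_iff.mp hv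
    have hB'E : B' v = E v := rfl
    refine exp_eig_aux (t • B') (hsmulB' t) ((t : ℂ) * μ) v ?_
    rw [ContinuousLinearMap.smul_apply, hB'E, hv', ← smul_assoc]
    rw [Complex.real_smul]
  have hEigNorm : ∀ (μ : ℂ) (v : Fin n → ℂ), v ∈ E.eigenspace μ → ∀ t : ℝ,
      ‖NormedSpace.exp (t • B') v‖ = Real.exp (t * μ.re) * ‖v‖ := by
    intro μ v hv t
    rw [hEig μ v hv t, norm_smul, Complex.norm_exp]
    congr 2
    simp
  -- semisimplicity of E
  have haeval : Polynomial.aeval E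
      ((minpoly ℝ A.toLinearMap).map (algebraMap ℝ ℂ)) = 0 := by
    set P := minpoly ℝ A.toLinearMap with hP
    have h0 : Polynomial.aeval A.toLinearMap P = 0 := minpoly.aeval ℝ _
    have h1 : Polynomial.aeval M P = 0 := by
      rw [hM, Polynomial.aeval_algHom_apply
        (LinearMap.toMatrixAlgEquiv' : ((Fin n → ℝ) →ₗ[ℝ] (Fin n → ℝ)) ≃ₐ[ℝ] _)
        A.toLinearMap P, h0, map_zero]
    have h2 : Polynomial.aeval Mc P = 0 := by
      have hφ : Mc = (Algebra.ofId ℝ ℂ).mapMatrix M := by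
        rw [hMc]
        ext i j
        simp [Algebra.ofId_apply]
      rw [hφ, Polynomial.aeval_algHom_apply, h1, map_zero]
    have h3 : Polynomial.aeval Mc (P.map (algebraMap ℝ ℂ)) = 0 := by
      rw [Polynomial.aeval_map_algebraMap, h2]
    rw [hE, Polynomial.aeval_algHom_apply
      (Matrix.toLinAlgEquiv' : Matrix (Fin n) (Fin n) ℂ ≃ₐ[ℂ] _) Mc
      (P.map (algebraMap ℝ ℂ)), h3, map_zero]
  have hPs : Squarefree ((minpoly ℝ A.toLinearMap).map (algebraMap ℝ ℂ)) :=
    ((PerfectField.separable_iff_squarefree.mpr hss).map).squarefree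
  have hsemi : E.IsSemisimple :=
    Module.End.isSemisimple_of_squarefree_aeval_eq_zero hPs haeval
  have htop : ⨆ μ : ℂ, E.eigenspace μ = ⊤ := by
    have h1 := Module.End.iSup_maxGenEigenspace_eq_top E
    simp only [hsemi.isFinitelySemisimple.maxGenEigenspace_eq_eigenspace] at h1
    exact h1
  have hind := Module.End.eigenspaces_iSupIndep E
  have hfin : {μ : ℂ | E.eigenspace μ ≠ ⊥}.Finite :=
    WellFoundedGT.finite_ne_bot_of_iSupIndep hind
  have hInt : DirectSum.IsInternal E.eigenspace :=
    DirectSum.isInternal_submodule_of_iSupIndep_of_iSup_eq_top hind htop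
  have hmaps : ∀ μ : ℂ, Set.MapsTo E (E.eigenspace μ) (E.eigenspace μ) := by
    intro μ x hx
    have hx' : E x = μ • x := Module.End.mem_eigenspace_iff.mp hx
    exact Module.End.mem_eigenspace_iff.mpr (by rw [hx', map_smul, hx'])
  -- trace computation
  have htrE : LinearMap.trace ℂ (Fin n → ℂ) E = 0 := by
    have h1 : E = Matrix.toLin' Mc := by
      ext v
      rfl
    rw [h1, LinearMap.trace_eq_matrix_trace ℂ (Pi.basisFun ℂ (Fin n)),
      LinearMap.toMatrix_eq_toMatrix', LinearMap.toMatrix'_toLin']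
    have h2 : Matrix.trace Mc = ((Matrix.trace M : ℝ) : ℂ) := by
      simp [Matrix.trace, hMc, Matrix.diag, Matrix.map_apply]
    rw [h2]
    have h3 : Matrix.trace M = LinearMap.trace ℝ (Fin n → ℝ) A.toLinearMap := by
      rw [LinearMap.trace_eq_matrix_trace ℝ (Pi.basisFun ℝ (Fin n)),
        LinearMap.toMatrix_eq_toMatrix']
      rfl
    rw [h3, htr]
    simp
  have htrsum : (0 : ℂ) = ∑ μ ∈ hfin.toFinset,
      μ * (Module.finrank ℂ (E.eigenspace μ) : ℂ) := by
    rw [← htrE, LinearMap.trace_eq_sum_trace_restrict' hInt hfin hmaps]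
    refine Finset.sum_congr rfl fun μ _ => ?_
    have hres : (E : (Fin n → ℂ) →ₗ[ℂ] (Fin n → ℂ)).restrict (hmaps μ)
        = μ • LinearMap.id := by
      refine LinearMap.ext fun x => Subtype.ext ?_
      have hx := Module.End.mem_eigenspace_iff.mp x.2
      exact hx
    rw [hres, map_smul, LinearMap.trace_id]
    simp [smul_eq_mul, mul_comm]
  -- some eigenvalue has nonzero real part
  have hre0 : ∃ μ : ℂ, E.eigenspace μ ≠ ⊥ ∧ μ.re ≠ 0 := by
    by_contra hcon
    push_neg at hcon
    apply h𝔫prop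
    set S : Submodule ℂ (Fin n → ℂ) :=
      { carrier := {w | ∃ C : ℝ, ∀ t : ℝ, ‖NormedSpace.exp (t • B') w‖ ≤ C}
        add_mem' := by
          rintro a b ⟨Ca, ha⟩ ⟨Cb, hb⟩
          exact ⟨Ca + Cb, fun t => by
            rw [map_add]
            exact (norm_add_le _ _).trans (add_le_add (ha t) (hb t))⟩
        zero_mem' := ⟨0, fun t => by simp⟩
        smul_mem' := by
          rintro c w ⟨C, hC⟩
          exact ⟨‖c‖ * C, fun t => by
            rw [hexpSmul, norm_smul]
            exact mul_le_mul_of_nonneg_left (hC t) (norm_nonneg c)⟩ } with hS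
    have hStop : S = ⊤ := by
      rw [eq_top_iff, ← htop]
      refine iSup_le fun μ => fun v hv => ?_
      by_cases hμ : E.eigenspace μ = ⊥
      · have : v = 0 := by
          rw [hμ] at hv
          simpa using hv
        rw [this]
        exact S.zero_mem
      · refine ⟨‖v‖, fun t => ?_⟩
        rw [hEigNorm μ v hv t, hcon μ hμ]
        simp
    rw [h𝔫]
    rw [Set.eq_univ_iff_forall]
    intro b
    have hmem : J (e b) ∈ S := by rw [hStop]; trivial
    obtain ⟨C, hC⟩ := hmem
    refine ⟨C, fun t => ?_⟩
    rw [← hJnorm, hexpJ]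
    exact hC t
  -- extract eigenvalues with positive and negative real parts
  have hd : ∀ μ : ℂ, E.eigenspace μ ≠ ⊥ → 0 < (Module.finrank ℂ (E.eigenspace μ) : ℝ) := by
    intro μ hμ
    have := (Submodule.finrank_eq_zero (S := E.eigenspace μ)).not.mpr hμ
    positivity
  have hsumre : ∑ μ ∈ hfin.toFinset, μ.re * (Module.finrank ℂ (E.eigenspace μ) : ℝ) = 0 := by
    have := congrArg Complex.re htrsum
    simpa [Complex.re_sum] using this.symm
  have hplus : ∃ μ : ℂ, E.eigenspace μ ≠ ⊥ ∧ 0 < μ.re := by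
    by_contra hcon
    push_neg at hcon
    obtain ⟨μ₀, hμ₀, hre⟩ := hre0
    have hμ₀s : μ₀ ∈ hfin.toFinset := hfin.mem_toFinset.mpr hμ₀
    have hlt : ∑ μ ∈ hfin.toFinset, μ.re * (Module.finrank ℂ (E.eigenspace μ) : ℝ)
        < ∑ μ ∈ hfin.toFinset, (0 : ℝ) := by
      refine Finset.sum_lt_sum (fun μ hμ => ?_) ⟨μ₀, hμ₀s, ?_⟩
      · have hμ' := hfin.mem_toFinset.mp hμ
        exact mul_nonpos_of_nonpos_of_nonneg (hcon μ hμ') (by positivity)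
      · exact mul_neg_of_neg_of_pos (lt_of_le_of_ne (hcon μ₀ hμ₀) hre) (hd μ₀ hμ₀)
    rw [hsumre] at hlt
    simp at hlt
  have hminus : ∃ μ : ℂ, E.eigenspace μ ≠ ⊥ ∧ μ.re < 0 := by
    by_contra hcon
    push_neg at hcon
    obtain ⟨μ₀, hμ₀, hre⟩ := hre0
    have hμ₀s : μ₀ ∈ hfin.toFinset := hfin.mem_toFinset.mpr hμ₀
    have hlt : ∑ μ ∈ hfin.toFinset, (0 : ℝ)
        < ∑ μ ∈ hfin.toFinset, μ.re * (Module.finrank ℂ (E.eigenspace μ) : ℝ) := by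
      refine Finset.sum_lt_sum (fun μ hμ => ?_) ⟨μ₀, hμ₀s, ?_⟩
      · have hμ' := hfin.mem_toFinset.mp hμ
        exact mul_nonneg (hcon μ hμ') (by positivity)
      · exact mul_pos (lt_of_le_of_ne (hcon μ₀ hμ₀) (Ne.symm hre)) (hd μ₀ hμ₀)
    rw [hsumre] at hlt
    simp at hlt
  -- main production step
  have key : ∀ (μ : ℂ), E.eigenspace μ ≠ ⊥ → ∀ l : Filter ℝ,
      Tendsto (fun t : ℝ => Real.exp (t * μ.re)) l (𝓝 0) →
      ∃ b : L, b ≠ 0 ∧ Tendsto (fun t : ℝ => NormedSpace.exp (t • A) (e b)) l (𝓝 0) := by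
    intro μ hμ l hl
    obtain ⟨v, hv, hvne⟩ := (Submodule.ne_bot_iff _).mp hμ
    have hcore : ∀ z : Fin n → ℝ, z ≠ 0 →
        (∃ c : ℂ, ‖c‖ = 2⁻¹ ∧ (J z = c • (v + Cj v) ∨ J z = c • (v - Cj v))) →
        ∃ b : L, b ≠ 0 ∧ Tendsto (fun t : ℝ => NormedSpace.exp (t • A) (e b)) l (𝓝 0) := by
      rintro z hz ⟨c, hc, hcase⟩
      have hbd : ∀ t : ℝ, ‖NormedSpace.exp (t • A) z‖ ≤ Real.exp (t * μ.re) * ‖v‖ := by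
        intro t
        rw [← hJnorm, hexpJ]
        have ha : ‖Complex.exp ((t : ℂ) * μ) • v‖ = Real.exp (t * μ.re) * ‖v‖ := by
          rw [norm_smul, Complex.norm_exp]
          congr 2
          simp
        rcases hcase with h | h
        · rw [h, hexpSmul, map_add, ← hexpC, hEig μ v hv t, norm_smul, hc]
          calc 2⁻¹ * ‖Complex.exp ((t:ℂ) * μ) • v + Cj (Complex.exp ((t:ℂ) * μ) • v)‖
              ≤ 2⁻¹ * (‖Complex.exp ((t:ℂ) * μ) • v‖ + ‖Cj (Complex.exp ((t:ℂ) * μ) • v)‖) := by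
                gcongr
                exact norm_add_le _ _
            _ = Real.exp (t * μ.re) * ‖v‖ := by rw [hCnorm, ha]; ring
        · rw [h, hexpSmul, map_sub, ← hexpC, hEig μ v hv t, norm_smul, hc]
          calc 2⁻¹ * ‖Complex.exp ((t:ℂ) * μ) • v - Cj (Complex.exp ((t:ℂ) * μ) • v)‖
              ≤ 2⁻¹ * (‖Complex.exp ((t:ℂ) * μ) • v‖ + ‖Cj (Complex.exp ((t:ℂ) * μ) • v)‖) := by
                gcongr
                exact norm_sub_le _ _
            _ = Real.exp (t * μ.re) * ‖v‖ := by rw [hCnorm, ha]; ring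
      refine ⟨e.symm z, ?_, ?_⟩
      · intro h0
        exact hz (by simpa using congrArg e h0)
      · rw [e.apply_symm_apply]
        refine squeeze_zero_norm hbd ?_
        simpa using hl.mul_const ‖v‖
    set x : Fin n → ℝ := fun i => (v i).re with hx
    set y : Fin n → ℝ := fun i => (v i).im with hy
    have hJx : J x = (2 : ℂ)⁻¹ • (v + Cj v) := by
      funext i
      simp only [Pi.smul_apply, Pi.add_apply, hJapp, hCapp, hx]
      rw [Complex.add_conj, smul_eq_mul]
      push_cast
      ring
    have hJy : J y = (2 * Complex.I)⁻¹ • (v - Cj v) := by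
      funext i
      simp only [Pi.smul_apply, Pi.sub_apply, hJapp, hCapp, hy]
      rw [Complex.sub_conj, smul_eq_mul]
      have h2 : (2 : ℂ) * Complex.I ≠ 0 := by simp [Complex.I_ne_zero]
      field_simp
      push_cast
      ring_nf
    by_cases hxz : x = 0
    · have hyz : y ≠ 0 := by
        intro hyz
        apply hvne
        funext i
        have h1 : (v i).re = 0 := congrFun hxz i
        have h2 : (v i).im = 0 := congrFun hyz i
        exact Complex.ext h1 h2
      refine hcore y hyz ⟨(2 * Complex.I)⁻¹, ?_, Or.inr hJy⟩
      simp [norm_inv]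
    · refine hcore x hxz ⟨(2 : ℂ)⁻¹, ?_, Or.inl hJx⟩
      simp
  constructor
  · obtain ⟨μ, hμ, hpos⟩ := hplus
    have hl : Tendsto (fun t : ℝ => Real.exp (t * μ.re)) atBot (𝓝 0) := by
      refine Real.tendsto_exp_atBot.comp ?_
      exact tendsto_id.atBot_mul_const hpos
    obtain ⟨b, hb0, hbt⟩ := key μ hμ atBot hl
    exact ⟨b, by rw [h𝔥]; exact hbt, hb0⟩
  · obtain ⟨μ, hμ, hneg⟩ := hminus
    have hl : Tendsto (fun t : ℝ => Real.exp (t * μ.re)) atTop (𝓝 0) := by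
      refine Real.tendsto_exp_atBot.comp ?_
      exact tendsto_id.atTop_mul_const_of_neg hneg
    obtain ⟨b, hb0, hbt⟩ := key μ hμ atTop hl
    exact ⟨b, by rw [h𝔥']; exact hbt, hb0⟩
end
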